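/- For any two rooted binary trees T1, T2 on n labeled leaves, the precise K-interval cospeciation distance satisfies d_k(T1, T2) ≤ n − 2. -/

import Mathlib

open Finset
open scoped Classical

noncomputable section

/-- An unrooted binary phylogenetic tree with `n` labeled leaves (`Sum.inl`)
and `n - 2` internal vertices (`Sum.inr`): a connected acyclic graph in which
every leaf has degree 1 and every internal vertex has degree 3. -/
def UTree (n : ℕ) : Type :=
  {G : SimpleGraph (Fin n ⊕ Fin (n - 2)) //
    G.Connected ∧ G.IsAcyclic ∧
    (∀ i : Fin n, G.degree (Sum.inl i) = 1) ∧
    (∀ j : Fin (n - 2), G.degree (Sum.inr j) = 3)}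

instance (n : ℕ) : Fintype (UTree n) := by
  unfold UTree; infer_instance

/-- The number of edges on the unique path between leaves `i` and `j`. -/
def leafDist {n : ℕ} (T : UTree n) (i j : Fin n) : ℕ :=
  T.1.dist (Sum.inl i) (Sum.inl j)

/-- The set of pairs `(i, j)` of leaves with `i < j`. -/
def leafPairs (n : ℕ) : Finset (Fin n × Fin n) :=
  univ.filter (fun p => p.1 < p.2)

/-- Edge difference distance: the `l₁` distance between vectorizations. -/
def d_e {n : ℕ} (T1 T2 : UTree n) : ℝ :=
  ∑ p ∈ leafPairs n, |(leafDist T1 p.1 p.2 : ℝ) - (leafDist T2 p.1 p.2 : ℝ)|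

/-- Path difference distance: the `l₂` distance between vectorizations. -/
def d_p {n : ℕ} (T1 T2 : UTree n) : ℝ :=
  Real.sqrt (∑ p ∈ leafPairs n, ((leafDist T1 p.1 p.2 : ℝ) - (leafDist T2 p.1 p.2 : ℝ)) ^ 2)

/-- Precise K-interval cospeciation distance: the `l_∞` distance between vectorizations. -/
def d_k {n : ℕ} (T1 T2 : UTree n) : ℕ :=
  (leafPairs n).sup (fun p => Nat.dist (leafDist T1 p.1 p.2) (leafDist T2 p.1 p.2))

/-- Two trees are identified in `T_n` when there is a graph isomorphism fixing every leaf. -/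
def LeafIso {n : ℕ} (T1 T2 : UTree n) : Prop :=
  ∃ e : (Fin n ⊕ Fin (n - 2)) ≃ (Fin n ⊕ Fin (n - 2)),
    (∀ i : Fin n, e (Sum.inl i) = Sum.inl i) ∧
    ∀ a b, T1.1.Adj a b ↔ T2.1.Adj (e a) (e b)

/-- A caterpillar tree: the internal vertices can be arranged along a path. -/
def Caterpillar {n : ℕ} (T : UTree n) : Prop :=
  ∃ σ : Fin (n - 2) ≃ Fin (n - 2), ∀ a b : Fin (n - 2),
    T.1.Adj (Sum.inr a) (Sum.inr b) ↔ Nat.dist ((σ a) : ℕ) ((σ b) : ℕ) = 1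

end

/-! Every leaf-to-leaf path in a binary tree on `n + 1` leaves passes through no other leaf,
so it visits at most the `n - 1` internal vertices besides its endpoints and has length at
most `n`. When there is an internal vertex, two leaves are never adjacent, since an edge
between two leaves would be a whole component; so leaf distances lie in `[2, n]`, and any two
of them differ by at most `n - 2`. -/

namespace SimpleGraph

variable {V : Type*} {G : SimpleGraph V} {u v : V}

lemma subsingleton_neighborSet_of_degree_eq_one [Fintype (G.neighborSet v)]
    (h : G.degree v = 1) : (G.neighborSet v).Subsingleton := by
  obtain ⟨w, -, hw⟩ := degree_eq_one_iff_existsUnique_adj.mp h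
  exact fun a ha b hb => (hw a ha).trans (hw b hb).symm

lemma Preconnected.eq_or_eq_of_adj_of_subsingleton_neighborSet (hG : G.Preconnected)
    (huv : G.Adj u v) (hu : (G.neighborSet u).Subsingleton)
    (hv : (G.neighborSet v).Subsingleton) (w : V) : w = u ∨ w = v := by
  by_contra! hw
  obtain ⟨p, hp⟩ := hG.exists_isPath u w
  have hnil : ¬p.Nil := Walk.not_nil_of_ne hw.1.symm
  have hsnd : p.snd = v := hu (p.adj_snd hnil) huv
  exact hp.isTrail.not_mem_support_of_subsingleton_neighborSet huv.ne.symm hw.2.symm hv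
    (hsnd ▸ p.getVert_mem_support 1)

lemma Walk.IsPath.length_le_card_add_one [DecidableEq V] {p : G.Walk u v} (hp : p.IsPath)
    {s : Finset V} (hs : ∀ x ∈ p.support, x ≠ u → x ≠ v → x ∈ s) :
    p.length ≤ s.card + 1 := by
  have hsub : p.support.toFinset ⊆ insert u (insert v s) := by
    intro x hx
    rw [List.mem_toFinset] at hx
    by_cases hxu : x = u
    · simp [hxu]
    by_cases hxv : x = v
    · simp [hxv]
    exact Finset.mem_insert_of_mem (Finset.mem_insert_of_mem (hs x hx hxu hxv))
  have hcard : p.length + 1 ≤ s.card + 2 := calc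
    p.length + 1 = p.support.toFinset.card := by
      rw [List.toFinset_card_of_nodup hp.support_nodup, length_support]
    _ ≤ (insert u (insert v s)).card := Finset.card_le_card hsub
    _ ≤ s.card + 2 :=
      (Finset.card_insert_le _ _).trans (Nat.succ_le_succ (Finset.card_insert_le _ _))
  omega

end SimpleGraph

namespace UTree

open SimpleGraph

variable {m : ℕ} (T : UTree m)

lemma subsingleton_neighborSet_inl (i : Fin m) : (T.1.neighborSet (.inl i)).Subsingleton :=
  subsingleton_neighborSet_of_degree_eq_one (T.2.2.2.1 i)

lemma one_le_leafDist {i j : Fin m} (hij : i ≠ j) : 1 ≤ leafDist T i j :=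
  T.2.1.pos_dist_of_ne (Sum.inl_injective.ne hij)

lemma two_le_leafDist (hm : 3 ≤ m) {i j : Fin m} (hij : i ≠ j) : 2 ≤ leafDist T i j := by
  have hnot_adj : ¬T.1.Adj (.inl i) (.inl j) := fun hadj => by
    have := T.2.1.preconnected.eq_or_eq_of_adj_of_subsingleton_neighborSet hadj
      (T.subsingleton_neighborSet_inl i) (T.subsingleton_neighborSet_inl j) (.inr ⟨0, by omega⟩)
    simp at this
  have h1 := T.one_le_leafDist hij
  have hne : leafDist T i j ≠ 1 := fun h => hnot_adj (dist_eq_one_iff_adj.mp h)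
  omega

lemma leafDist_le (i j : Fin m) : leafDist T i j ≤ m - 1 := by
  by_cases hij : i = j
  · simp [leafDist, hij]
  obtain ⟨p, hp⟩ := T.2.1.exists_isPath (.inl i) (.inl j)
  have hinterior : ∀ x ∈ p.support, x ≠ .inl i → x ≠ .inl j →
      x ∈ Finset.univ.map Function.Embedding.inr := by
    rintro (k | k) hx hxi hxj
    · exact absurd hx (hp.isTrail.not_mem_support_of_subsingleton_neighborSet hxi hxj
        (T.subsingleton_neighborSet_inl k))
    · simp
  have hlen := hp.length_le_card_add_one hinterior
  have hm : 2 ≤ m := by have := Fin.val_ne_of_ne hij; omega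
  simp only [Finset.card_map, Finset.card_univ, Fintype.card_fin] at hlen
  have hdist := dist_le p
  unfold leafDist
  omega

end UTree

/-- A rooted binary tree on `n` labeled leaves is identified with an unrooted
binary tree on `n + 1` leaves (the root being an extra leaf).  For any two
such trees, the precise K-interval cospeciation distance satisfies
`d_k(T1, T2) ≤ n - 2`. -/
theorem rooted_kic_bound (n : ℕ) (T1 T2 : UTree (n + 1)) :
    d_k T1 T2 ≤ n - 2 := by
  refine Finset.sup_le fun p hp => ?_
  have hij : p.1 ≠ p.2 := (Finset.mem_filter.mp hp).2.ne
  have hlo1 := T1.one_le_leafDist hij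
  have hlo2 := T2.one_le_leafDist hij
  have hhi1 := T1.leafDist_le p.1 p.2
  have hhi2 := T2.leafDist_le p.1 p.2
  unfold Nat.dist
  rcases lt_or_ge n 2 with hn | hn
  · omega
  · have := T1.two_le_leafDist (by omega) hij
    have := T2.two_le_leafDist (by omega) hij
    omega
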